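/- arXiv:2505.00943 — 3 statements merged into one kernel-verified Lean document; each statement's English description precedes it below -/
import Mathlib

section
/- Let Γ be a group acting by isometries on a complete CAT(0) space X, and let H₁, H₂ ≤ Γ be subgroups such that H₂ normalizes H₁. If both Fix(H₁) and Fix(H₂) are non-empty, then Fix(H₁) ∩ Fix(H₂) is non-empty. -/
/-- A geodesic segment from `x` to `y`, parameterized proportionally to arc length on `[0,1]`. -/
def IsGeodesicSeg {X : Type*} [MetricSpace X] (x y : X) (γ : ℝ → X) : Prop :=
  γ 0 = x ∧ γ 1 = y ∧
    ∀ s ∈ Set.Icc (0:ℝ) 1, ∀ t ∈ Set.Icc (0:ℝ) 1, dist (γ s) (γ t) = |s - t| * dist x y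

/-- A CAT(0) space: a geodesic metric space satisfying the CN (Bruhat–Tits comparison)
inequality, which for geodesic spaces is equivalent to the CAT(0) comparison-triangle
condition. -/
class CAT0Space (X : Type*) [MetricSpace X] : Prop where
  geodesic : ∀ x y : X, ∃ γ : ℝ → X, IsGeodesicSeg x y γ
  cn : ∀ x y z m : X, dist y m = dist y z / 2 → dist z m = dist y z / 2 →
    dist x m ^ 2 ≤ (dist x y ^ 2 + dist x z ^ 2) / 2 - dist y z ^ 2 / 4

/-!
The fixed set `C` of `H₁` is closed, midpoint-convex and, as `H₂` normalizes `H₁`, invariant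
under `H₂`. The `H₂`-orbit `S` of a point of `C` is bounded, since `H₂` fixes a point. By the
CN inequality the squared circumradius `y ↦ sup_{s ∈ S} d(y, s)²` is strongly midpoint-convex,
so it has a unique minimizer on `C` (Bruhat–Tits). As `H₂` preserves both `S` and `C`, it fixes
this minimizer.
-/

open Bornology Filter Metric MulAction Set Topology

section FixedPoints

variable {Γ : Type*} [Group Γ]

def commonFixedPoints (X : Type*) [MulAction Γ X] (H : Set Γ) : Set X :=
  {x | ∀ g ∈ H, g • x = x}

variable {X : Type*} [MulAction Γ X]

theorem isClosed_commonFixedPoints [TopologicalSpace X] [T2Space X]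
    (hcont : ∀ g : Γ, Continuous (fun x : X => g • x)) (H : Set Γ) :
    IsClosed (commonFixedPoints X H) := by
  simp only [commonFixedPoints, ofPred_forall]
  exact isClosed_iInter fun g => isClosed_iInter fun _ => isClosed_eq (hcont g) continuous_id

theorem smul_mem_commonFixedPoints_of_mem_normalizer {H : Set Γ} {g : Γ}
    (hg : g ∈ Subgroup.normalizer H) {x : X} (hx : x ∈ commonFixedPoints X H) :
    g • x ∈ commonFixedPoints X H := by
  intro h hh
  have hconj : g⁻¹ * h * g ∈ H := (Subgroup.mem_set_normalizer_iff''.1 hg h).1 hh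
  calc h • g • x = g • (g⁻¹ * h * g) • x := by simp only [smul_smul]; group
    _ = g • x := by rw [hx _ hconj]

end FixedPoints

section MetricSpace

variable {X : Type*} [MetricSpace X]

def IsMidpoint (y z m : X) : Prop :=
  dist y m = dist y z / 2 ∧ dist z m = dist y z / 2

theorem IsMidpoint.isometry {Y : Type*} [MetricSpace Y] {f : X → Y} (hf : Isometry f)
    {y z m : X} (h : IsMidpoint y z m) : IsMidpoint (f y) (f z) (f m) := by
  simpa only [IsMidpoint, hf.dist_eq] using h

theorem CAT0Space.exists_isMidpoint [CAT0Space X] (y z : X) : ∃ m, IsMidpoint y z m := by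
  obtain ⟨γ, hγ0, hγ1, hγ⟩ := CAT0Space.geodesic y z
  have half : (1 / 2 : ℝ) ∈ Icc 0 1 := by norm_num
  have hy := hγ 0 (by norm_num) (1 / 2) half
  have hz := hγ 1 (by norm_num) (1 / 2) half
  rw [hγ0] at hy
  rw [hγ1] at hz
  refine ⟨γ (1 / 2), ?_, ?_⟩
  · rw [hy]; norm_num; ring
  · rw [hz]; norm_num; ring

theorem IsMidpoint.unique [CAT0Space X] {y z m m' : X} (h : IsMidpoint y z m)
    (h' : IsMidpoint y z m') : m = m' := by
  have hcn := CAT0Space.cn m y z m' h'.1 h'.2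
  rw [dist_comm m y, h.1, dist_comm m z, h.2] at hcn
  exact dist_eq_zero.1 <| (sq_nonpos_iff _).1 (by linarith)

section Minimizer

variable {C : Set X} {F : X → ℝ}

/-- Modelled on the CN inequality, which is this inequality for `F = (dist x ·) ^ 2`. -/
def StrongMidpointConvexOn (C : Set X) (F : X → ℝ) : Prop :=
  ∀ y ∈ C, ∀ z ∈ C, ∃ m ∈ C, F m ≤ (F y + F z) / 2 - dist y z ^ 2 / 4

theorem StrongMidpointConvexOn.dist_sq_le (hF : StrongMidpointConvexOn C F) {ρ : ℝ}
    (hρ : ∀ x ∈ C, ρ ≤ F x) {y z : X} (hy : y ∈ C) (hz : z ∈ C) :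
    dist y z ^ 2 ≤ 2 * (F y + F z) - 4 * ρ := by
  obtain ⟨m, hm, hFm⟩ := hF y hy z hz
  linarith [hρ m hm]

/-- The sublevel sets `{F ≤ inf F + 1/(n+1)²}` in `C` are closed, nonempty, nested and of
diameter at most `2/(n+1)`, so they meet by Cantor's intersection theorem. -/
theorem StrongMidpointConvexOn.exists_isMinOn [CompleteSpace X]
    (hF : StrongMidpointConvexOn C F) (hC : IsClosed C) (hCne : C.Nonempty)
    (hFlsc : LowerSemicontinuous F) (hbdd : BddBelow (F '' C)) : ∃ c ∈ C, IsMinOn F C c := by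
  set ρ := sInf (F '' C)
  have hρ : ∀ x ∈ C, ρ ≤ F x := fun x hx => csInf_le hbdd (mem_image_of_mem F hx)
  set δ : ℕ → ℝ := fun n => 1 / (n + 1)
  set s : ℕ → Set X := fun n => C ∩ F ⁻¹' Iic (ρ + δ n ^ 2)
  have hδ_pos (n : ℕ) : 0 < δ n := Nat.one_div_pos_of_nat
  have hδ_tendsto : Tendsto δ atTop (𝓝 0) := tendsto_one_div_add_atTop_nhds_zero_nat
  have hs_dist (n : ℕ) : ∀ y ∈ s n, ∀ z ∈ s n, dist y z ≤ 2 * δ n := by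
    rintro y ⟨hy, hFy⟩ z ⟨hz, hFz⟩
    have h := hF.dist_sq_le hρ hy hz
    rw [mem_preimage, mem_Iic] at hFy hFz
    refine (pow_le_pow_iff_left₀ dist_nonneg (by linarith [hδ_pos n]) two_ne_zero).1 ?_
    linarith
  have hs_nonempty (N : ℕ) : (⋂ n ≤ N, s n).Nonempty := by
    obtain ⟨_, ⟨y, hy, rfl⟩, hFy⟩ :=
      exists_lt_of_csInf_lt (hCne.image F) (lt_add_of_pos_right ρ (pow_pos (hδ_pos N) 2))
    refine ⟨y, mem_iInter₂.2 fun n hn => ⟨hy, ?_⟩⟩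
    have hδ_le : δ N ≤ δ n := Nat.one_div_le_one_div hn
    rw [mem_preimage, mem_Iic]
    nlinarith [hδ_pos N]
  obtain ⟨c, hc⟩ := nonempty_iInter_of_nonempty_biInter
    (fun n => hC.inter (hFlsc.isClosed_preimage _))
    (fun n => isBounded_iff.2 ⟨_, hs_dist n⟩) hs_nonempty
    (squeeze_zero (fun n => diam_nonneg)
      (fun n => diam_le_of_forall_dist_le (by linarith [hδ_pos n]) (hs_dist n))
      (by simpa using hδ_tendsto.const_mul 2))
  have hcs (n : ℕ) : c ∈ s n := mem_iInter.1 hc n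
  have hFc : F c ≤ ρ := by
    refine ge_of_tendsto' (x := atTop) ?_ fun n => (hcs n).2
    simpa using tendsto_const_nhds.add (hδ_tendsto.pow 2)
  exact ⟨c, (hcs 0).1, fun y hy => hFc.trans (hρ y hy)⟩

theorem StrongMidpointConvexOn.existsUnique_isMinOn [CompleteSpace X]
    (hF : StrongMidpointConvexOn C F) (hC : IsClosed C) (hCne : C.Nonempty)
    (hFlsc : LowerSemicontinuous F) (hbdd : BddBelow (F '' C)) :
    ∃! c, c ∈ C ∧ IsMinOn F C c := by
  obtain ⟨c, hc, hmin⟩ := hF.exists_isMinOn hC hCne hFlsc hbdd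
  refine ⟨c, ⟨hc, hmin⟩, fun c' ⟨hc', hmin'⟩ => ?_⟩
  have h := hF.dist_sq_le (fun x hx => hmin' hx) hc' hc
  have hFc : F c ≤ F c' := hmin hc'
  exact dist_eq_zero.1 <| (sq_nonpos_iff _).1 (by linarith)

end Minimizer

section Circumradius

variable {S : Set X}

noncomputable def circumradiusSq (S : Set X) (y : X) : ℝ :=
  sSup ((fun s => dist y s ^ 2) '' S)

theorem circumradiusSq_nonneg (y : X) : 0 ≤ circumradiusSq S y :=
  Real.sSup_nonneg <| forall_mem_image.2 fun _ _ => sq_nonneg _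

theorem Bornology.IsBounded.bddAbove_dist_sq (hS : IsBounded S) (y : X) :
    BddAbove ((fun s => dist y s ^ 2) '' S) := by
  obtain ⟨r, hr⟩ := (isBounded_iff_subset_closedBall y).1 hS
  refine ⟨r ^ 2, forall_mem_image.2 fun s hs => ?_⟩
  exact pow_le_pow_left₀ dist_nonneg (mem_closedBall'.1 (hr hs)) 2

theorem Bornology.IsBounded.dist_sq_le_circumradiusSq (hS : IsBounded S) (y : X) {s : X}
    (hs : s ∈ S) : dist y s ^ 2 ≤ circumradiusSq S y :=
  le_csSup (hS.bddAbove_dist_sq y) (mem_image_of_mem _ hs)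

theorem Bornology.IsBounded.lowerSemicontinuous_circumradiusSq (hS : IsBounded S) :
    LowerSemicontinuous (circumradiusSq S) := by
  have h : circumradiusSq S = fun y => ⨆ s : S, dist y (s : X) ^ 2 := by
    ext y
    rw [circumradiusSq, image_eq_range]
    rfl
  rw [h]
  refine lowerSemicontinuous_ciSup (fun y => ?_) fun s => ?_
  · simpa only [image_eq_range] using hS.bddAbove_dist_sq y
  · exact ((continuous_id.dist continuous_const).pow 2).lowerSemicontinuous

theorem circumradiusSq_image {f : X → X} (hf : Isometry f) (y : X) :
    circumradiusSq (f '' S) (f y) = circumradiusSq S y := by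
  simp only [circumradiusSq, image_image, hf.dist_eq]

theorem CAT0Space.strongMidpointConvexOn_circumradiusSq [CAT0Space X] (hS : IsBounded S)
    (hSne : S.Nonempty) {C : Set X} (hC : ∀ y ∈ C, ∀ z ∈ C, ∃ m ∈ C, IsMidpoint y z m) :
    StrongMidpointConvexOn C (circumradiusSq S) := by
  intro y hy z hz
  obtain ⟨m, hm, hmid⟩ := hC y hy z hz
  refine ⟨m, hm, csSup_le (hSne.image _) (forall_mem_image.2 fun s hs => ?_)⟩
  have hcn := cn s y z m hmid.1 hmid.2
  rw [dist_comm s y, dist_comm s z] at hcn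
  rw [dist_comm m s]
  linarith [hS.dist_sq_le_circumradiusSq y hs, hS.dist_sq_le_circumradiusSq z hs]

end Circumradius

section IsometricAction

variable {G : Type*} [Group G] [MulAction G X]

theorem CAT0Space.exists_isMidpoint_mem_commonFixedPoints [CAT0Space X]
    (hiso : ∀ g : G, Isometry (fun x : X => g • x)) (H : Set G) :
    ∀ y ∈ commonFixedPoints X H, ∀ z ∈ commonFixedPoints X H,
      ∃ m ∈ commonFixedPoints X H, IsMidpoint y z m := by
  intro y hy z hz
  obtain ⟨m, hm⟩ := exists_isMidpoint y z
  refine ⟨m, fun g hg => ?_, hm⟩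
  have hgm : IsMidpoint y z (g • m) := by
    simpa only [hy g hg, hz g hg] using hm.isometry (hiso g)
  exact hgm.unique hm

theorem isBounded_orbit_of_smul_eq_self (hiso : ∀ g : G, Isometry (fun x : X => g • x))
    {x₀ : X} (hx₀ : ∀ g : G, g • x₀ = x₀) (x : X) : IsBounded (orbit G x) := by
  refine (isBounded_iff_subset_closedBall x₀).2 ⟨dist x x₀, ?_⟩
  rintro _ ⟨g, rfl⟩
  rw [mem_closedBall, ← (hiso g).dist_eq x x₀, hx₀ g]

/-- The fixed point is the circumcenter of the orbit relative to `C`. -/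
theorem CAT0Space.exists_mem_forall_smul_eq_of_isBounded_orbit [CompleteSpace X] [CAT0Space X]
    (hiso : ∀ g : G, Isometry (fun x : X => g • x)) {C : Set X} (hC : IsClosed C)
    (hCne : C.Nonempty) (hmid : ∀ y ∈ C, ∀ z ∈ C, ∃ m ∈ C, IsMidpoint y z m)
    (hCinv : ∀ g : G, ∀ x ∈ C, g • x ∈ C)
    {x : X} (hx : IsBounded (orbit G x)) : ∃ c ∈ C, ∀ g : G, g • c = c := by
  have hF := strongMidpointConvexOn_circumradiusSq hx ⟨x, mem_orbit_self x⟩ hmid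
  obtain ⟨c, ⟨hc, hmin⟩, huniq⟩ := hF.existsUnique_isMinOn hC hCne
    hx.lowerSemicontinuous_circumradiusSq
    ⟨0, forall_mem_image.2 fun y _ => circumradiusSq_nonneg y⟩
  refine ⟨c, hc, fun g => huniq _ ⟨hCinv g c hc, fun y hy => ?_⟩⟩
  have hinv : circumradiusSq (orbit G x) (g • c) = circumradiusSq (orbit G x) c := by
    rw [← circumradiusSq_image (hiso g) c, image_smul, smul_orbit]
  rw [hinv]
  exact hmin hy

end IsometricAction

end MetricSpace

/-- If H₂ normalizes H₁ and both have nonempty fixed-point sets in a complete CAT(0)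
space on which the ambient group acts by isometries, then they have a common fixed point. -/
theorem fix_inter_of_normalizes {Γ : Type*} [Group Γ]
    {X : Type*} [MetricSpace X] [CompleteSpace X] [CAT0Space X]
    [MulAction Γ X] (hiso : ∀ g : Γ, Isometry (fun x : X => g • x))
    (H₁ H₂ : Subgroup Γ) (hnorm : H₂ ≤ Subgroup.normalizer (H₁ : Set Γ))
    (h1 : ∃ x : X, ∀ g ∈ H₁, g • x = x) (h2 : ∃ x : X, ∀ g ∈ H₂, g • x = x) :
    ∃ x : X, (∀ g ∈ H₁, g • x = x) ∧ (∀ g ∈ H₂, g • x = x) := by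
  obtain ⟨x₁, hx₁⟩ := h1
  obtain ⟨x₂, hx₂⟩ := h2
  have hiso₂ (g : H₂) : Isometry (fun x : X => g • x) := hiso g
  obtain ⟨c, hc, hfix⟩ := CAT0Space.exists_mem_forall_smul_eq_of_isBounded_orbit hiso₂
    (isClosed_commonFixedPoints (fun g => (hiso g).continuous) H₁) ⟨x₁, hx₁⟩
    (CAT0Space.exists_isMidpoint_mem_commonFixedPoints hiso H₁)
    (fun g _ hx => smul_mem_commonFixedPoints_of_mem_normalizer (hnorm g.2) hx)
    (isBounded_orbit_of_smul_eq_self hiso₂ (fun g => hx₂ g g.2) x₁)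
  exact ⟨c, hc, fun g hg => hfix ⟨g, hg⟩⟩
end

section
/- For positive integers n and k, define g_n(k) = (k−1)·⌊n/(k+1)⌋. Then for 3 ≤ k ≤ n−1 one has g_n(3) ≤ g_n(k) + 1, with equality if and only if k is even and n ∈ {2k, 2k+1}. -/
/-- The function g_n(k) = (k − 1)⌊n/(k + 1)⌋ (natural-number division is the floor). -/
def gfun (n k : ℕ) : ℕ := (k - 1) * (n / (k + 1))

/-!
Put q = ⌊n/(k+1)⌋ ≥ 1, so that n < (k+1)(q+1) and g_n(3) = 2⌊n/4⌋.
If q ≥ 2, then n is at most 2(k-1)q + 3, or at most 2(k-1)q + 1 when (k-1)q is odd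
(then q ≥ 3 and k ≥ 4), and either bound gives 2⌊n/4⌋ ≤ (k-1)q = g_n(k).
If q = 1, then g_n(k) = k - 1 and n ≤ 2k + 1, so 2⌊n/4⌋ ≤ k, with equality exactly
when k is even and ⌊n/4⌋ = k/2, i.e. n ∈ {2k, 2k+1}.
-/

namespace Nat

theorem two_mul_div_four_le_of_le {n m : ℕ} (h : n ≤ 2 * m + 1) : 2 * (n / 4) ≤ m := by
  omega

theorem two_mul_div_four_le_of_lt_of_even {n m : ℕ} (h : n < 2 * m + 4) (hm : Even m) :
    2 * (n / 4) ≤ m := by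
  obtain ⟨r, rfl⟩ := hm
  omega

theorem two_mul_div_four_eq_iff {n k : ℕ} (h : n ≤ 2 * k + 1) :
    2 * (n / 4) = k ↔ Even k ∧ (n = 2 * k ∨ n = 2 * k + 1) := by
  rw [Nat.even_iff]
  omega

end Nat

theorem gfun_three (n : ℕ) : gfun n 3 = 2 * (n / 4) := rfl

theorem gfun_of_div_eq_one {n k : ℕ} (hq : n / (k + 1) = 1) : gfun n k = k - 1 := by
  rw [gfun, hq, mul_one]

theorem gfun_three_le_gfun_of_two_le_div {n k : ℕ} (hk : 3 ≤ k) (hq : 2 ≤ n / (k + 1)) :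
    gfun n 3 ≤ gfun n k := by
  have hlt := Nat.lt_mul_div_succ n (Nat.succ_pos k)
  rw [gfun_three, gfun]
  set q := n / (k + 1)
  obtain ⟨j, rfl⟩ : ∃ j, k = j + 3 := ⟨k - 3, by omega⟩
  rw [show j + 3 - 1 = j + 2 by omega] at *
  rcases Nat.even_or_odd ((j + 2) * q) with hA | hA
  · exact Nat.two_mul_div_four_le_of_lt_of_even (by nlinarith) hA
  · obtain ⟨hj_odd, hq_odd⟩ := Nat.odd_mul.mp hA
    have hj1 : 1 ≤ j := by rcases hj_odd with ⟨r, hr⟩; omega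
    have hq3 : 3 ≤ q := by rcases hq_odd with ⟨r, hr⟩; omega
    exact Nat.two_mul_div_four_le_of_le (by nlinarith)

theorem gfun_three_le_general (n k : ℕ) (hk3 : 3 ≤ k) (hkn : k ≤ n - 1) :
    gfun n 3 ≤ gfun n k + 1 ∧
      (gfun n 3 = gfun n k + 1 ↔ Even k ∧ (n = 2 * k ∨ n = 2 * k + 1)) := by
  have hq : 1 ≤ n / (k + 1) := (Nat.one_le_div_iff k.succ_pos).2 (by omega)
  rcases hq.eq_or_lt with hq1 | hq2
  · have hn : n ≤ 2 * k + 1 := by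
      have := Nat.lt_mul_div_succ n k.succ_pos
      rw [← hq1] at this
      omega
    rw [gfun_three, gfun_of_div_eq_one hq1.symm, Nat.sub_add_cancel (by omega : 1 ≤ k)]
    exact ⟨Nat.two_mul_div_four_le_of_le hn, Nat.two_mul_div_four_eq_iff hn⟩
  · have hle := gfun_three_le_gfun_of_two_le_div hk3 hq2
    have hn : ¬(n = 2 * k ∨ n = 2 * k + 1) := by
      rintro hn
      have : n / (k + 1) < 2 := Nat.div_lt_of_lt_mul (by omega)
      omega
    exact ⟨by omega, by simp only [hn, and_false, iff_false]; omega⟩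

/-- For 3 ≤ k ≤ n − 1, g_n(3) ≤ g_n(k) + 1, with equality iff k is even and n ∈ {2k, 2k+1}. -/
theorem gfun_three_le (n k : ℕ) (hn : 0 < n) (hk3 : 3 ≤ k) (hkn : k ≤ n - 1) :
    gfun n 3 ≤ gfun n k + 1 ∧
      (gfun n 3 = gfun n k + 1 ↔ Even k ∧ (n = 2 * k ∨ n = 2 * k + 1)) :=
  gfun_three_le_general n k hk3 hkn
end

section
/- In the braid group B_m with standard generators σ₁, …, σ_{m−1} and σ_m := σ₁⋯σ_{m−2}σ_{m−1}σ_{m−2}^{−1}⋯σ₁^{−1}, the relation [σ_i, σ_j] = 1 holds whenever |i − j| ≢ ±1 (mod m). -/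
/-- The defining relators of the braid group B_m on the standard generators σ₁, …, σ_{m−1}
(here indexed zero-based by Fin (m − 1)): the braid relations for adjacent generators and
commutation of distant generators. -/
def braidRels (m : ℕ) : Set (FreeGroup (Fin (m - 1))) :=
  {r | (∃ i j : Fin (m - 1), (i : ℕ) + 1 = (j : ℕ) ∧
          r = FreeGroup.of i * FreeGroup.of j * FreeGroup.of i *
            (FreeGroup.of j * FreeGroup.of i * FreeGroup.of j)⁻¹) ∨
       (∃ i j : Fin (m - 1), (i : ℕ) + 2 ≤ (j : ℕ) ∧
          r = FreeGroup.of i * FreeGroup.of j * (FreeGroup.of j * FreeGroup.of i)⁻¹)}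

/-- The braid group B_m, presented by the standard generators and relations. -/
def BraidGroup (m : ℕ) : Type := PresentedGroup (braidRels m)

instance (m : ℕ) : Group (BraidGroup m) := inferInstanceAs (Group (PresentedGroup _))

/-- The elements σ₁, …, σ_m of B_m (one-based indexing): for 1 ≤ i ≤ m − 1 the standard
generator, and σ_m := σ₁⋯σ_{m−2} σ_{m−1} σ_{m−2}⁻¹⋯σ₁⁻¹ (the value is 1 for indices out of
range). -/
noncomputable def sigmaB (m : ℕ) (i : ℕ) : BraidGroup m :=
  if h : 1 ≤ i ∧ i ≤ m - 1 then
    PresentedGroup.of (⟨i - 1, by omega⟩ : Fin (m - 1))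
  else if h2 : i = m ∧ 2 ≤ m then
    (List.ofFn fun t : Fin (m - 2) =>
        PresentedGroup.of (Fin.castLE (by omega) t : Fin (m - 1))).prod *
      PresentedGroup.of (⟨m - 2, by omega⟩ : Fin (m - 1)) *
      ((List.ofFn fun t : Fin (m - 2) =>
        PresentedGroup.of (Fin.castLE (by omega) t : Fin (m - 1))).prod)⁻¹
  else 1

/-!
Put `δ = σ₁ ⋯ σ_{m-2}`. The braid relations give `δ σ_k δ⁻¹ = σ_{k+1}` for `k ≤ m - 3`, so for
`2 ≤ j ≤ m - 2` both `σ_m = δ σ_{m-1} δ⁻¹` and `σ_j = δ σ_{j-1} δ⁻¹` are conjugates by `δ` of the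
commuting generators `σ_{m-1}` and `σ_{j-1}`. Every other pair allowed by the congruence
conditions consists of equal elements or of standard generators at distance at least two.
-/

section BraidFamily

variable {G : Type*} [Group G] {g : ℕ → G}

theorem commute_prod_ofFn_of_lt (hcomm : ∀ k l, k + 2 ≤ l → Commute (g k) (g l)) {t l : ℕ}
    (h : t < l) : Commute (List.ofFn fun i : Fin t => g i).prod (g l) :=
  Commute.list_prod_left _ _ fun _ hx => by
    obtain ⟨i, rfl⟩ := List.mem_ofFn.mp hx
    exact hcomm _ _ (by omega)

theorem prod_ofFn_succ (t : ℕ) :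
    (List.ofFn fun i : Fin (t + 1) => g i).prod = (List.ofFn fun i : Fin t => g i).prod * g t := by
  rw [List.ofFn_succ', List.prod_concat]
  rfl

theorem semiconjBy_prod_ofFn {n : ℕ}
    (hbraid : ∀ k, k + 1 < n → g k * g (k + 1) * g k = g (k + 1) * g k * g (k + 1))
    (hcomm : ∀ k l, k + 2 ≤ l → Commute (g k) (g l)) {k t : ℕ} (hk : k + 2 ≤ t) (ht : t ≤ n) :
    SemiconjBy (List.ofFn fun i : Fin t => g i).prod (g k) (g (k + 1)) := by
  induction t, hk using Nat.le_induction with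
  | base =>
    have hpair : SemiconjBy (g k * g (k + 1)) (g k) (g (k + 1)) := by
      simpa only [SemiconjBy, mul_assoc] using hbraid k (by omega)
    rw [prod_ofFn_succ, prod_ofFn_succ, mul_assoc]
    exact SemiconjBy.mul_left (commute_prod_ofFn_of_lt hcomm (l := k + 1) (by omega)) hpair
  | succ t hkt ih =>
    rw [prod_ofFn_succ]
    exact SemiconjBy.mul_left (ih (by omega)) (hcomm k t hkt).symm

end BraidFamily

namespace BraidGroup

/-- `gen m k` is `σ_{k+1}`; it is `1` out of range, so that the generators form a family
`ℕ → B_m`. -/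
noncomputable def gen (m k : ℕ) : BraidGroup m :=
  if h : k < m - 1 then PresentedGroup.of (⟨k, h⟩ : Fin (m - 1)) else 1

variable {m : ℕ}

theorem gen_of {k : ℕ} (h : k < m - 1) :
    gen m k = PresentedGroup.of (⟨k, h⟩ : Fin (m - 1)) :=
  dif_pos h

theorem gen_braid {k : ℕ} (h : k + 1 < m - 1) :
    gen m k * gen m (k + 1) * gen m k = gen m (k + 1) * gen m k * gen m (k + 1) := by
  have hrel := PresentedGroup.mk_eq_mk_of_mul_inv_mem (rels := braidRels m)
    (Or.inl ⟨⟨k, by omega⟩, ⟨k + 1, h⟩, rfl, rfl⟩)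
  simp only [map_mul] at hrel
  rw [gen_of h, gen_of (by omega)]
  exact hrel

theorem commute_gen {k l : ℕ} (h : k + 2 ≤ l) : Commute (gen m k) (gen m l) := by
  by_cases hl : l < m - 1
  · have hrel := PresentedGroup.mk_eq_mk_of_mul_inv_mem (rels := braidRels m)
      (Or.inr ⟨⟨k, by omega⟩, ⟨l, hl⟩, h, rfl⟩)
    simp only [map_mul] at hrel
    rw [gen_of hl, gen_of (by omega)]
    exact hrel
  · rw [show gen m l = 1 from dif_neg hl]
    exact Commute.one_right _

theorem sigmaB_eq_gen {i : ℕ} (hi : 1 ≤ i) (hi' : i ≤ m - 1) : sigmaB m i = gen m (i - 1) := by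
  rw [gen_of (by omega)]
  exact dif_pos ⟨hi, hi'⟩

theorem sigmaB_self (hm : 2 ≤ m) :
    sigmaB m m = (List.ofFn fun t : Fin (m - 2) => gen m t).prod * gen m (m - 2) *
      ((List.ofFn fun t : Fin (m - 2) => gen m t).prod)⁻¹ := by
  have hgen : ∀ t : Fin (m - 2), gen m t = PresentedGroup.of (Fin.castLE (by omega) t) :=
    fun t => gen_of _
  rw [gen_of (by omega)]
  refine (dif_neg (by omega)).trans ((dif_pos ⟨rfl, hm⟩).trans ?_)
  simp only [hgen]
  rfl

theorem commute_sigmaB_self {k : ℕ} (hk : 2 ≤ k) (hk' : k ≤ m - 2) :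
    Commute (sigmaB m m) (sigmaB m k) := by
  set δ := (List.ofFn fun t : Fin (m - 2) => gen m t).prod
  have hshift : SemiconjBy δ (gen m (k - 2)) (gen m (k - 1)) := by
    rw [show k - 1 = k - 2 + 1 by omega]
    exact semiconjBy_prod_ofFn (n := m - 1) (fun _ => gen_braid) (fun _ _ => commute_gen)
      (by omega) (by omega)
  rw [sigmaB_self (by omega), sigmaB_eq_gen (by omega) (by omega), eq_mul_inv_of_mul_eq hshift.symm]
  exact (commute_gen (by omega)).symm.conj δ

end BraidGroup

theorem intCast_modEq_add_one_of_cyclic_succ {m i j : ℕ} (h : i = j + 1 ∨ (i = 1 ∧ j = m)) :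
    (i : ℤ) ≡ j + 1 [ZMOD m] := by
  rcases h with rfl | ⟨rfl, rfl⟩
  · push_cast
    rfl
  · exact Int.modEq_iff_dvd.mpr ⟨1, by ring⟩

open BraidGroup

theorem braid_commute_general (m : ℕ) (i j : ℕ) (hi : 1 ≤ i) (hi' : i ≤ m)
    (hj : 1 ≤ j) (hj' : j ≤ m)
    (h1 : ¬((i : ℤ) ≡ (j : ℤ) + 1 [ZMOD (m : ℤ)]))
    (h2 : ¬((j : ℤ) ≡ (i : ℤ) + 1 [ZMOD (m : ℤ)])) :
    Commute (sigmaB m i) (sigmaB m j) := by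
  have hij : ¬(i = j + 1 ∨ (i = 1 ∧ j = m)) := mt intCast_modEq_add_one_of_cyclic_succ h1
  have hji : ¬(j = i + 1 ∨ (j = 1 ∧ i = m)) := mt intCast_modEq_add_one_of_cyclic_succ h2
  rcases hi'.lt_or_eq with hi' | rfl <;> rcases hj'.lt_or_eq with hj' | rfl
  · rw [sigmaB_eq_gen hi (by omega), sigmaB_eq_gen hj (by omega)]
    rcases lt_trichotomy i j with h | rfl | h
    · exact commute_gen (by omega)
    · exact Commute.refl _
    · exact (commute_gen (by omega)).symm
  · exact (commute_sigmaB_self (by omega) (by omega)).symm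
  · exact commute_sigmaB_self (by omega) (by omega)
  · exact Commute.refl _

/-- In B_m, σ_i and σ_j commute whenever i − j ≢ ±1 (mod m). -/
theorem braid_commute (m : ℕ) (hm : 3 ≤ m) (i j : ℕ) (hi : 1 ≤ i) (hi' : i ≤ m)
    (hj : 1 ≤ j) (hj' : j ≤ m)
    (h1 : ¬((i : ℤ) ≡ (j : ℤ) + 1 [ZMOD (m : ℤ)]))
    (h2 : ¬((j : ℤ) ≡ (i : ℤ) + 1 [ZMOD (m : ℤ)])) :
    Commute (sigmaB m i) (sigmaB m j) :=
  braid_commute_general m i j hi hi' hj hj' h1 h2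
end
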